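/- Let m > 0, let O, v_O, ω : ℝ → ℝ³ be differentiable with O'(t) = v_O(t), and define A(t,x) = m (v_O(t) + ω(t) × (x − O(t))), φ(t,x) = ‖A(t,x)‖²/(2m), E(t,x) = (∇_x φ(t,·))(x) − ∂A/∂t(t,x), and B(t,x) = (∇ × A(t,·))(x). Then for all t ∈ ℝ, x ∈ ℝ³ and every velocity v ∈ ℝ³, E(t,x) + v × B(t,x) = −m [ v_O'(t) + ω'(t) × (x − O(t)) + ω(t) × (ω(t) × (x − O(t))) ] − 2m ω(t) × v; that is, the Lorentz-type force E + v × B derived from the generalized potential U = φ + A · v equals the sum of the dragging force F_τ = −m a_τ and the Coriolis force F_c = −2m ω × v. -/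

import Mathlib

/-!
For fixed `t`, `A t` is affine in `x` with linear part `y ↦ (m ω) × y`, a skew-adjoint map.
Hence `∇ × A = 2 m ω`, so `v × B = -2 m ω × v` is the Coriolis force, and
`∇ₓ (‖A‖² / 2m) = -ω × A`. Differentiating `A` in `t` with `Ȯ = v_O` produces a term
`-m ω × v_O` which cancels the one in `-ω × A`, leaving the dragging force in `E`.
-/

noncomputable section
open scoped RealInnerProductSpace

/-- Euclidean 3-space. -/
abbrev E3 : Type := EuclideanSpace ℝ (Fin 3)

/-- Constructor for vectors in `E3` from three coordinates. -/
def vec3 (a b c : ℝ) : E3 := (WithLp.equiv 2 (Fin 3 → ℝ)).symm ![a, b, c]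

/-- The cross product on `E3`. -/
def cross3 (a b : E3) : E3 :=
  vec3 (a 1 * b 2 - a 2 * b 1) (a 2 * b 0 - a 0 * b 2) (a 0 * b 1 - a 1 * b 0)

/-- `pderiv3 F j x i` is the partial derivative `∂_j F_i` at `x`. -/
def pderiv3 (F : E3 → E3) (j : Fin 3) (x : E3) (i : Fin 3) : ℝ :=
  fderiv ℝ F x (EuclideanSpace.single j 1) i

/-- The curl `∇ × F` of a vector field on `E3`:
`(∇×F)_1 = ∂_2 F_3 − ∂_3 F_2`, `(∇×F)_2 = ∂_3 F_1 − ∂_1 F_3`, `(∇×F)_3 = ∂_1 F_2 − ∂_2 F_1`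
(written here with 0-based indices). -/
def curl3 (F : E3 → E3) (x : E3) : E3 :=
  vec3 (pderiv3 F 1 x 2 - pderiv3 F 2 x 1)
       (pderiv3 F 2 x 0 - pderiv3 F 0 x 2)
       (pderiv3 F 0 x 1 - pderiv3 F 1 x 0)

/-- The divergence `∇ · F = ∂_1 F_1 + ∂_2 F_2 + ∂_3 F_3` of a vector field on `E3`. -/
def div3 (F : E3 → E3) (x : E3) : ℝ :=
  pderiv3 F 0 x 0 + pderiv3 F 1 x 1 + pderiv3 F 2 x 2

@[simp] lemma vec3_apply_zero (a b c : ℝ) : vec3 a b c 0 = a := rfl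
@[simp] lemma vec3_apply_one (a b c : ℝ) : vec3 a b c 1 = b := rfl
@[simp] lemma vec3_apply_two (a b c : ℝ) : vec3 a b c 2 = c := rfl

lemma E3.ext {a b : E3} (h0 : a 0 = b 0) (h1 : a 1 = b 1) (h2 : a 2 = b 2) : a = b := by
  ext i; fin_cases i <;> assumption

@[simp] lemma cross3_apply_zero (a b : E3) : cross3 a b 0 = a 1 * b 2 - a 2 * b 1 := rfl
@[simp] lemma cross3_apply_one (a b : E3) : cross3 a b 1 = a 2 * b 0 - a 0 * b 2 := rfl
@[simp] lemma cross3_apply_two (a b : E3) : cross3 a b 2 = a 0 * b 1 - a 1 * b 0 := rfl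

lemma isBilinearMap_cross3 : IsBilinearMap ℝ cross3 where
  add_left a a' b := E3.ext (by simp; ring) (by simp; ring) (by simp; ring)
  smul_left c a b := E3.ext (by simp; ring) (by simp; ring) (by simp; ring)
  add_right a b b' := E3.ext (by simp; ring) (by simp; ring) (by simp; ring)
  smul_right c a b := E3.ext (by simp; ring) (by simp; ring) (by simp; ring)

def cross3L : E3 →L[ℝ] E3 →L[ℝ] E3 := isBilinearMap_cross3.toContinuousBilinearMap

@[simp] lemma cross3L_apply (a b : E3) : cross3L a b = cross3 a b := rfl

lemma cross3_add_right (a b c : E3) : cross3 a (b + c) = cross3 a b + cross3 a c :=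
  isBilinearMap_cross3.add_right a b c

lemma cross3_sub_right (a b c : E3) : cross3 a (b - c) = cross3 a b - cross3 a c :=
  map_sub (cross3L a) b c

lemma cross3_neg_right (a b : E3) : cross3 a (-b) = -cross3 a b :=
  map_neg (cross3L a) b

lemma cross3_smul_left (c : ℝ) (a b : E3) : cross3 (c • a) b = c • cross3 a b :=
  isBilinearMap_cross3.smul_left c a b

lemma cross3_smul_right (c : ℝ) (a b : E3) : cross3 a (c • b) = c • cross3 a b :=
  isBilinearMap_cross3.smul_right c a b

lemma cross3_anticomm (a b : E3) : cross3 a b = -cross3 b a :=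
  E3.ext (by simp; ring) (by simp; ring) (by simp; ring)

lemma inner_cross3_left (w a b : E3) : ⟪cross3 w a, b⟫ = -⟪a, cross3 w b⟫ := by
  simp only [PiLp.inner_apply, RCLike.inner_apply, conj_trivial, Fin.sum_univ_three,
    cross3_apply_zero, cross3_apply_one, cross3_apply_two]
  ring

lemma adjoint_cross3L (w : E3) : ContinuousLinearMap.adjoint (cross3L w) = cross3L (-w) := by
  refine ((ContinuousLinearMap.eq_adjoint_iff _ _).2 fun a b => ?_).symm
  simp only [cross3L_apply, map_neg, neg_apply, inner_neg_left,
    inner_cross3_left, neg_neg]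

theorem HasDerivAt.cross3 {f g : ℝ → E3} {f' g' : E3} {t : ℝ}
    (hf : HasDerivAt f f' t) (hg : HasDerivAt g g' t) :
    HasDerivAt (fun s => cross3 (f s) (g s)) (cross3 f' (g t) + cross3 (f t) g') t :=
  (cross3L.hasFDerivAt.comp_hasDerivAt t hf).clm_apply hg

lemma hasFDerivAt_add_cross3_sub (c w p x : E3) :
    HasFDerivAt (fun y => c + cross3 w (y - p)) (cross3L w) x := by
  have h : (fun y => c + cross3 w (y - p)) = fun y => (c - cross3 w p) + cross3L w y := by
    funext y; rw [cross3L_apply, cross3_sub_right]; abel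
  rw [h]
  exact (cross3L w).hasFDerivAt.const_add _

lemma curl3_of_hasFDerivAt_cross3L {F : E3 → E3} {w x : E3}
    (hF : HasFDerivAt F (cross3L w) x) : curl3 F x = (2 : ℝ) • w := by
  apply E3.ext <;> simp [curl3, pderiv3, hF.fderiv] <;> ring

lemma HasFDerivAt.hasGradientAt_norm_sq_div {E F : Type*} [NormedAddCommGroup E]
    [InnerProductSpace ℝ E] [CompleteSpace E] [NormedAddCommGroup F] [InnerProductSpace ℝ F]
    [CompleteSpace F] {f : E → F} {L : E →L[ℝ] F} {x : E}
    (hf : HasFDerivAt f L x) (c : ℝ) :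
    HasGradientAt (fun y => ‖f y‖ ^ 2 / c) ((2 / c) • ContinuousLinearMap.adjoint L (f x)) x := by
  simp_rw [hasGradientAt_iff_hasFDerivAt, div_eq_mul_inv]
  refine (hf.norm_sq.mul_const c⁻¹).congr_fderiv ?_
  ext h
  simp only [smul_apply, ContinuousLinearMap.comp_apply, coe_innerSL_apply, nsmul_eq_mul,
    Nat.cast_ofNat, smul_eq_mul, map_smul, InnerProductSpace.toDual_apply_apply,
    ContinuousLinearMap.adjoint_inner_left]
  ring

/-- For the vector potential `A = m v_τ` and scalar potential
`φ = ‖A‖²/(2m)`, with `E = ∇ₓφ − ∂A/∂t` and `B = ∇ × A(t,·)`, the Lorentz-type force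
`E + v × B` equals the sum of the dragging force `−m a_τ` and the Coriolis force
`−2m ω × v`. -/
theorem apparent_forces_from_generalized_potential (m : ℝ) (hm : 0 < m) (O vO ω : ℝ → E3)
    (hO : Differentiable ℝ O) (hvO : Differentiable ℝ vO) (hω : Differentiable ℝ ω)
    (hO' : ∀ t, deriv O t = vO t)
    (A : ℝ → E3 → E3) (hA : ∀ t x, A t x = m • (vO t + cross3 (ω t) (x - O t)))
    (φ : ℝ → E3 → ℝ) (hφ : ∀ t x, φ t x = ‖A t x‖ ^ 2 / (2 * m))
    (Efld : ℝ → E3 → E3)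
    (hE : ∀ t x, Efld t x = gradient (φ t) x - deriv (fun s => A s x) t)
    (Bfld : ℝ → E3 → E3)
    (hB : ∀ t x, Bfld t x = curl3 (A t) x)
    (t : ℝ) (x : E3) (v : E3) :
    Efld t x + cross3 v (Bfld t x)
      = -(m • (deriv vO t + cross3 (deriv ω t) (x - O t)
            + cross3 (ω t) (cross3 (ω t) (x - O t))))
        - (2 * m) • cross3 (ω t) v := by
  have hAt : A t = fun y => m • vO t + cross3 (m • ω t) (y - O t) := by
    funext y; rw [hA, smul_add, cross3_smul_left]
  have hDA : HasFDerivAt (A t) (cross3L (m • ω t)) x :=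
    hAt ▸ hasFDerivAt_add_cross3_sub _ _ _ x
  have hcurl : Bfld t x = (2 * m) • ω t := by
    rw [hB, curl3_of_hasFDerivAt_cross3L hDA, smul_smul]
  have hgrad : gradient (φ t) x = -cross3 (ω t) (A t x) := by
    have hφt : φ t = fun y => ‖A t y‖ ^ 2 / (2 * m) := funext (hφ t)
    rw [hφt, (hDA.hasGradientAt_norm_sq_div (2 * m)).gradient, adjoint_cross3L, cross3L_apply,
      ← neg_smul, cross3_smul_left, smul_smul, show 2 / (2 * m) * -m = -1 by field_simp,
      neg_one_smul]
  have hOt : HasDerivAt O (vO t) t := hO' t ▸ (hO t).hasDerivAt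
  have hrt := (hω t).hasDerivAt.cross3 (hOt.const_sub x)
  have hdt : deriv (fun s => A s x) t
      = m • (deriv vO t + (cross3 (deriv ω t) (x - O t) + cross3 (ω t) (-vO t))) := by
    simp_rw [hA]
    exact (((hvO t).hasDerivAt.add hrt).const_smul m).deriv
  rw [hE, hgrad, hdt, hcurl, hA, cross3_anticomm v]
  simp only [cross3_add_right, cross3_smul_right, cross3_smul_left, cross3_neg_right]
  module
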